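/- Nonnegativity is preserved for the full SEIR system: if a solution (s, e, i, r) of the uncontrolled SEIR system on [0,T] has nonnegative initial conditions s(0), e(0), i(0), r(0) ≥ 0, then s(t), e(t), i(t), r(t) ≥ 0 for all t ∈ [0,T]. -/

import Mathlib

/-! The SEIR field is quasi-positive with a linear margin: if every coordinate of a state is at
least `-δ` and one of them equals `-δ`, that coordinate's rate is at least `-L δ`, where
`L = β M + γ + μ` and `M` bounds `|s|` and `|i|` along the solution. Hence, once `ε e^{(L+1) t}`
is added to every coordinate, a coordinate that reaches `0` while the others are nonnegative has
positive derivative there, so no coordinate ever leaves `[0, ∞)`; then let `ε → 0`. -/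

open Set Filter Topology

theorem eventually_nhdsGT_pos_of_hasDerivWithinAt {f : ℝ → ℝ} {f' x : ℝ}
    (hf : HasDerivWithinAt f f' (Ici x) x) (hx : f x = 0) (hf' : 0 < f') :
    ∀ᶠ z in 𝓝[>] x, 0 < f z := by
  have hslope : Tendsto (slope f x) (𝓝[>] x) (𝓝 f') :=
    (hasDerivWithinAt_iff_tendsto_slope' (lt_irrefl x)).1 hf.Ioi_of_Ici
  filter_upwards [hslope.eventually (lt_mem_nhds hf'), self_mem_nhdsWithin] with z hz hxz
  rw [slope_def_field, hx, sub_zero] at hz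
  exact (div_pos_iff_of_pos_right (sub_pos.2 hxz)).1 hz

theorem eventually_nhdsGT_nonneg_of_hasDerivWithinAt {f : ℝ → ℝ} {f' x : ℝ}
    (hf : HasDerivWithinAt f f' (Ici x) x) (hx : 0 ≤ f x) (hf' : f x = 0 → 0 < f') :
    ∀ᶠ z in 𝓝[>] x, 0 ≤ f z := by
  rcases hx.eq_or_lt with hx | hx
  · exact (eventually_nhdsGT_pos_of_hasDerivWithinAt hf hx.symm (hf' hx.symm)).mono
      fun _ => le_of_lt
  · exact ((hf.continuousWithinAt.mono Ioi_subset_Ici_self).eventually (lt_mem_nhds hx)).mono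
      fun _ => le_of_lt

theorem nonneg_on_Icc_of_deriv_pos_of_eq_zero {ι : Type*} [Finite ι] {y y' : ι → ℝ → ℝ}
    {a b : ℝ} (hcont : ∀ k, ContinuousOn (y k) (Icc a b))
    (hderiv : ∀ k, ∀ t ∈ Ico a b, HasDerivWithinAt (y k) (y' k t) (Ici t) t)
    (ha : ∀ k, 0 ≤ y k a)
    (hpos : ∀ t ∈ Ico a b, (∀ j, 0 ≤ y j t) → ∀ k, y k t = 0 → 0 < y' k t) :
    ∀ t ∈ Icc a b, ∀ k, 0 ≤ y k t := by
  set S := {t | ∀ k, 0 ≤ y k t}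
  have hS : IsClosed (S ∩ Icc a b) := by
    have : S ∩ Icc a b = Icc a b ∩ ⋂ k, Icc a b ∩ y k ⁻¹' Ici 0 := by ext; aesop
    exact this ▸ isClosed_Icc.inter (isClosed_iInter fun k =>
      (hcont k).preimage_isClosed_of_isClosed isClosed_Icc isClosed_Ici)
  refine fun t ht => hS.Icc_subset_of_forall_mem_nhdsWithin ha ?_ ht
  rintro t ⟨htS, ht⟩
  exact eventually_all.2 fun k =>
    eventually_nhdsGT_nonneg_of_hasDerivWithinAt (hderiv k t ht) (htS k) (hpos t ht htS k)

theorem nonneg_on_Icc_of_quasiPositive {ι : Type*} [Finite ι] {x x' : ι → ℝ → ℝ} {a b L : ℝ}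
    (hcont : ∀ k, ContinuousOn (x k) (Icc a b))
    (hderiv : ∀ k, ∀ t ∈ Ico a b, HasDerivWithinAt (x k) (x' k t) (Ici t) t)
    (ha : ∀ k, 0 ≤ x k a)
    (hmargin : ∀ t ∈ Ico a b, ∀ δ > 0, (∀ j, -δ ≤ x j t) → ∀ k, x k t = -δ → -(L * δ) ≤ x' k t) :
    ∀ t ∈ Icc a b, ∀ k, 0 ≤ x k t := by
  intro t ht k
  have hperturbed : ∀ ε > 0, 0 ≤ x k t + ε * Real.exp ((L + 1) * t) := by
    intro ε hε
    set φ := fun u => ε * Real.exp ((L + 1) * u)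
    have hφpos : ∀ u, 0 < φ u := fun u => by positivity
    have hφ : ∀ u, HasDerivAt φ ((L + 1) * φ u) u := fun u => by
      have := ((hasDerivAt_id u).const_mul (L + 1)).exp.const_mul ε
      rwa [id, mul_one, mul_comm (Real.exp _), ← mul_assoc, mul_comm ε, mul_assoc] at this
    have hφcont : Continuous φ := continuous_iff_continuousAt.2 fun u => (hφ u).continuousAt
    refine nonneg_on_Icc_of_deriv_pos_of_eq_zero (y := fun j u => x j u + φ u)
      (y' := fun j u => x' j u + (L + 1) * φ u)
      (fun j => (hcont j).add hφcont.continuousOn)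
      (fun j u hu => (hderiv j u hu).add (hφ u).hasDerivWithinAt)
      (fun j => add_nonneg (ha j) (hφpos a).le) ?_ t ht k
    intro u hu hy j hj
    have := hmargin u hu (φ u) (hφpos u) (fun i => by linarith [hy i]) j (by linarith)
    linarith [hφpos u]
  have hE := Real.exp_pos ((L + 1) * t)
  refine le_of_forall_pos_le_add fun η hη => ?_
  simpa [div_mul_cancel₀ _ hE.ne'] using hperturbed (η / Real.exp ((L + 1) * t)) (div_pos hη hE)

theorem neg_mul_le_mul_of_neg_le_of_abs_le {a b δ M : ℝ} (hδ : 0 ≤ δ) (ha : -δ ≤ a) (hb : -δ ≤ b)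
    (haM : |a| ≤ M) (hbM : |b| ≤ M) : -(M * δ) ≤ a * b := by
  rcases le_total 0 a with ha0 | ha0 <;> rcases le_total 0 b with hb0 | hb0
  · nlinarith [abs_nonneg a]
  · nlinarith [le_abs_self a]
  · nlinarith [le_abs_self b]
  · nlinarith [mul_nonneg ((abs_nonneg a).trans haM) hδ]

-- The state is `x = (s, e, i, r)`.
def seirVectorField (β γ μ : ℝ) (x : Fin 4 → ℝ) : Fin 4 → ℝ :=
  ![-β * x 0 * x 2, β * x 0 * x 2 - γ * x 1, γ * x 1 - μ * x 2, μ * x 2]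

theorem neg_mul_le_seirVectorField {β γ μ M δ : ℝ} (hβ : 0 ≤ β) (hγ : 0 ≤ γ) (hμ : 0 ≤ μ)
    (hδ : 0 ≤ δ) {x : Fin 4 → ℝ} (hx : ∀ j, -δ ≤ x j) (hs : |x 0| ≤ M) (hi : |x 2| ≤ M)
    (k : Fin 4) (hk : x k = -δ) : -((β * M + γ + μ) * δ) ≤ seirVectorField β γ μ x k := by
  have hsi := neg_mul_le_mul_of_neg_le_of_abs_le hδ (hx 0) (hx 2) hs hi
  have hM : 0 ≤ M := (abs_nonneg _).trans hs
  have hγδ := mul_nonneg hγ hδ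
  have hμδ := mul_nonneg hμ hδ
  have hβMδ := mul_nonneg (mul_nonneg hβ hM) hδ
  fin_cases k <;> simp only [Fin.zero_eta, Fin.mk_one, Fin.reduceFinMk, Fin.isValue,
    seirVectorField, Matrix.cons_val_zero, Matrix.cons_val_one, Matrix.cons_val] at hk ⊢
  · rw [hk]; linarith [mul_le_mul_of_nonneg_left (neg_le_of_abs_le hi) (mul_nonneg hβ hδ)]
  · rw [hk]; linarith [mul_le_mul_of_nonneg_left hsi hβ]
  · rw [hk]; linarith [mul_le_mul_of_nonneg_left (hx 1) hγ]
  · linarith [mul_le_mul_of_nonneg_left (hx 2) hμ]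

theorem seir_nonnegativity_general (β γ μ T : ℝ) (hβ : 0 < β) (hγ : 0 < γ) (hμ : 0 < μ)
    (s e i r : ℝ → ℝ)
    (hs : ∀ t ∈ Icc 0 T, HasDerivAt s (-β * s t * i t) t)
    (he : ∀ t ∈ Icc 0 T, HasDerivAt e (β * s t * i t - γ * e t) t)
    (hi : ∀ t ∈ Icc 0 T, HasDerivAt i (γ * e t - μ * i t) t)
    (hr : ∀ t ∈ Icc 0 T, HasDerivAt r (μ * i t) t)
    (hs0 : 0 ≤ s 0) (he0 : 0 ≤ e 0) (hi0 : 0 ≤ i 0) (hr0 : 0 ≤ r 0) :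
    ∀ t ∈ Icc 0 T, 0 ≤ s t ∧ 0 ≤ e t ∧ 0 ≤ i t ∧ 0 ≤ r t := by
  set X : Fin 4 → ℝ → ℝ := ![s, e, i, r]
  have hderiv : ∀ k, ∀ t ∈ Icc 0 T, HasDerivAt (X k) (seirVectorField β γ μ (X · t) k) t := by
    intro k t ht; fin_cases k
    exacts [hs t ht, he t ht, hi t ht, hr t ht]
  have hcont : ∀ k, ContinuousOn (X k) (Icc 0 T) := fun k t ht =>
    (hderiv k t ht).continuousAt.continuousWithinAt
  obtain ⟨Ms, hMs⟩ := isCompact_Icc.exists_bound_of_continuousOn (hcont 0)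
  obtain ⟨Mi, hMi⟩ := isCompact_Icc.exists_bound_of_continuousOn (hcont 2)
  have hX := nonneg_on_Icc_of_quasiPositive (x := X) hcont
    (fun k t ht => (hderiv k t (Ico_subset_Icc_self ht)).hasDerivWithinAt)
    (by intro k; fin_cases k <;> assumption)
    (fun t ht δ hδ hXt k hk => neg_mul_le_seirVectorField hβ.le hγ.le hμ.le hδ.le hXt
      ((hMs t (Ico_subset_Icc_self ht)).trans (le_max_left Ms Mi))
      ((hMi t (Ico_subset_Icc_self ht)).trans (le_max_right Ms Mi)) k hk)
  exact fun t ht => ⟨hX t ht 0, hX t ht 1, hX t ht 2, hX t ht 3⟩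

theorem seir_nonnegativity (β γ μ T : ℝ) (hβ : 0 < β) (hγ : 0 < γ) (hμ : 0 < μ)
    (s e i r : ℝ → ℝ)
    (hscont : ContinuousOn s (Icc 0 T)) (hecont : ContinuousOn e (Icc 0 T))
    (hicont : ContinuousOn i (Icc 0 T)) (hrcont : ContinuousOn r (Icc 0 T))
    (hs : ∀ t ∈ Icc 0 T, HasDerivAt s (-β * s t * i t) t)
    (he : ∀ t ∈ Icc 0 T, HasDerivAt e (β * s t * i t - γ * e t) t)
    (hi : ∀ t ∈ Icc 0 T, HasDerivAt i (γ * e t - μ * i t) t)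
    (hr : ∀ t ∈ Icc 0 T, HasDerivAt r (μ * i t) t)
    (hs0 : 0 ≤ s 0) (he0 : 0 ≤ e 0) (hi0 : 0 ≤ i 0) (hr0 : 0 ≤ r 0) :
    ∀ t ∈ Icc 0 T, 0 ≤ s t ∧ 0 ≤ e t ∧ 0 ≤ i t ∧ 0 ≤ r t :=
  seir_nonnegativity_general β γ μ T hβ hγ hμ s e i r hs he hi hr hs0 he0 hi0 hr0
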